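/- arXiv:1208.5680 — 3 statements merged into one kernel-verified Lean document; each statement's English description precedes it below -/
import Mathlib

section
/- The functions K1 = I_q + I_p, K2 = J_q + J_p, and K3 = I_q + J_q are pairwise in involution ({K1,K2} = {K2,K3} = {K3,K1} = 0) and each Poisson-commutes with the reduced Hamiltonian Ĥ = p^2(I_p + J_p) + q^2(I_q + J_q) + (I_p + I_q)(J_p + J_q) + 2 sqrt(I_p I_q J_p J_q) cos(θ_q − θ_p + φ_p − φ_q). -/
open Real

/-- Canonical Poisson bracket on the phase space `Fin 8 → ℝ`, with coordinates
`x 0 = θp, x 1 = θq, x 2 = φp, x 3 = φq, x 4 = Ip, x 5 = Iq, x 6 = Jp, x 7 = Jq`: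
`{f,g} = Σ_j (∂f/∂(angle j) ∂g/∂(action j) − ∂f/∂(action j) ∂g/∂(angle j))`. -/
noncomputable def pb (f g : (Fin 8 → ℝ) → ℝ) (x : Fin 8 → ℝ) : ℝ :=
  ∑ j : Fin 4,
    (fderiv ℝ f x (Pi.single (Fin.castAdd 4 j) 1) * fderiv ℝ g x (Pi.single (Fin.addNat j 4) 1) -
      fderiv ℝ f x (Pi.single (Fin.addNat j 4) 1) * fderiv ℝ g x (Pi.single (Fin.castAdd 4 j) 1))

noncomputable def K1 (x : Fin 8 → ℝ) : ℝ := x 5 + x 4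
noncomputable def K2 (x : Fin 8 → ℝ) : ℝ := x 7 + x 6
noncomputable def K3 (x : Fin 8 → ℝ) : ℝ := x 5 + x 7

/-- The reduced Hamiltonian `Ĥ`. -/
noncomputable def Hhat (p q : ℤ) (x : Fin 8 → ℝ) : ℝ :=
  (p : ℝ) ^ 2 * (x 4 + x 6) + (q : ℝ) ^ 2 * (x 5 + x 7) + (x 4 + x 5) * (x 6 + x 7) +
    2 * Real.sqrt (x 4 * x 5 * x 6 * x 7) * Real.cos (x 1 - x 0 + x 2 - x 3)

/-!
Each `Kᵢ` is a sum of two actions, so its Hamiltonian flow translates the two conjugate angles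
at unit speed and `{Kᵢ, f}` is minus the derivative of `f` along that translation. The `Kᵢ` do not
depend on the angles, and `Ĥ` depends on them only through `θ_q − θ_p + φ_p − φ_q`, which each of
the three translations leaves unchanged; a function invariant along a line has zero derivative
along it.
-/

def anglePair (a b : Fin 4) : Fin 8 → ℝ :=
  Pi.single (Fin.castAdd 4 a) 1 + Pi.single (Fin.castAdd 4 b) 1

def actionPair (a b : Fin 4) (y : Fin 8 → ℝ) : ℝ :=
  y (Fin.addNat a 4) + y (Fin.addNat b 4)

theorem addNat_ne_castAdd (i j : Fin 4) : Fin.addNat i 4 ≠ Fin.castAdd 4 j := by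
  simp only [ne_eq, Fin.ext_iff, Fin.val_addNat, Fin.val_castAdd]
  omega

theorem anglePair_addNat (a b i : Fin 4) : anglePair a b (Fin.addNat i 4) = 0 := by
  simp [anglePair, addNat_ne_castAdd]

theorem hasFDerivAt_actionPair (a b : Fin 4) (x : Fin 8 → ℝ) :
    HasFDerivAt (actionPair a b)
      (ContinuousLinearMap.proj (R := ℝ) (φ := fun _ : Fin 8 => ℝ) (Fin.addNat a 4) +
        ContinuousLinearMap.proj (Fin.addNat b 4)) x :=
  (hasFDerivAt_apply _ x).add (hasFDerivAt_apply _ x)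

theorem pb_actionPair (a b : Fin 4) (f : (Fin 8 → ℝ) → ℝ) (x : Fin 8 → ℝ) :
    pb (actionPair a b) f x = -fderiv ℝ f x (anglePair a b) := by
  simp [pb, (hasFDerivAt_actionPair a b x).fderiv, anglePair, Pi.single_apply, addNat_ne_castAdd,
    Fin.addNat_inj 4, add_mul, Finset.sum_add_distrib, add_comm]

theorem fderiv_apply_eq_zero_of_forall_add_smul {E F : Type*} [NormedAddCommGroup E]
    [NormedSpace ℝ E] [NormedAddCommGroup F] [NormedSpace ℝ F] {f : E → F} {x v : E}
    (hf : ∀ t : ℝ, f (x + t • v) = f x) : fderiv ℝ f x v = 0 := by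
  by_cases hd : DifferentiableAt ℝ f x
  · rw [← hd.lineDeriv_eq_fderiv, lineDeriv]
    simp only [hf, deriv_const]
  · simp [fderiv_zero_of_not_differentiableAt hd]

theorem pb_actionPair_eq_zero {a b : Fin 4} {f : (Fin 8 → ℝ) → ℝ} {x : Fin 8 → ℝ}
    (hf : ∀ t : ℝ, f (x + t • anglePair a b) = f x) : pb (actionPair a b) f x = 0 := by
  rw [pb_actionPair, fderiv_apply_eq_zero_of_forall_add_smul hf, neg_zero]

theorem actionPair_add_smul_anglePair (a b c d : Fin 4) (y : Fin 8 → ℝ) (t : ℝ) :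
    actionPair c d (y + t • anglePair a b) = actionPair c d y := by
  simp [actionPair, anglePair_addNat]

/-- `hab` says that the translation fixes the resonant angle `θ_q − θ_p + φ_p − φ_q`. -/
theorem Hhat_add_smul_anglePair (p q : ℤ) {a b : Fin 4} (y : Fin 8 → ℝ) (t : ℝ)
    (hab : anglePair a b 1 - anglePair a b 0 + anglePair a b 2 - anglePair a b 3 = 0) :
    Hhat p q (y + t • anglePair a b) = Hhat p q y := by
  have h4 : anglePair a b 4 = 0 := anglePair_addNat a b 0
  have h5 : anglePair a b 5 = 0 := anglePair_addNat a b 1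
  have h6 : anglePair a b 6 = 0 := anglePair_addNat a b 2
  have h7 : anglePair a b 7 = 0 := anglePair_addNat a b 3
  have hres : (y + t • anglePair a b) 1 - (y + t • anglePair a b) 0 + (y + t • anglePair a b) 2 -
      (y + t • anglePair a b) 3 = y 1 - y 0 + y 2 - y 3 := by
    simp only [Pi.add_apply, Pi.smul_apply, smul_eq_mul]
    linear_combination t * hab
  simp only [Hhat, hres]
  simp [h4, h5, h6, h7]

theorem K_involution_and_commute_with_Hhat_general (p q : ℤ) (x : Fin 8 → ℝ) :
    pb K1 K2 x = 0 ∧ pb K2 K3 x = 0 ∧ pb K3 K1 x = 0 ∧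
      pb K1 (Hhat p q) x = 0 ∧ pb K2 (Hhat p q) x = 0 ∧ pb K3 (Hhat p q) x = 0 := by
  have hK1 : K1 = actionPair 1 0 := rfl
  have hK2 : K2 = actionPair 3 2 := rfl
  have hK3 : K3 = actionPair 1 3 := rfl
  have hK {a b c d : Fin 4} : pb (actionPair a b) (actionPair c d) x = 0 :=
    pb_actionPair_eq_zero fun t => actionPair_add_smul_anglePair a b c d x t
  have hH {a b : Fin 4}
      (hab : anglePair a b 1 - anglePair a b 0 + anglePair a b 2 - anglePair a b 3 = 0) :
      pb (actionPair a b) (Hhat p q) x = 0 :=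
    pb_actionPair_eq_zero fun t => Hhat_add_smul_anglePair p q x t hab
  rw [hK1, hK2, hK3]
  refine ⟨hK, hK, hK, hH ?_, hH ?_, hH ?_⟩ <;> simp [anglePair, Fin.ext_iff]

theorem K_involution_and_commute_with_Hhat (p q : ℤ) (hpq : p ≠ q) (x : Fin 8 → ℝ)
    (h4 : 0 < x 4) (h5 : 0 < x 5) (h6 : 0 < x 6) (h7 : 0 < x 7) :
    pb K1 K2 x = 0 ∧ pb K2 K3 x = 0 ∧ pb K3 K1 x = 0 ∧
      pb K1 (Hhat p q) x = 0 ∧ pb K2 (Hhat p q) x = 0 ∧ pb K3 (Hhat p q) x = 0 :=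
  K_involution_and_commute_with_Hhat_general p q x
end

section
/- For every γ with 0 < γ < 1/2, the Hamiltonian system ψ' = −2(1−2K)cos ψ, K' = −2K(1−K)sin ψ with initial datum (ψ(0), K(0)) = (0, γ) admits a periodic solution of some period 2T_γ > 0, and this solution satisfies (ψ(T_γ), K(T_γ)) = (0, 1−γ); moreover K(t) ∈ (0,1) for all t. -/
/-!
Put `a = 1 - 2γ`. Along the level set `2K(1-K) cos ψ = 2γ(1-γ) = (1 - a²)/2` write
`K = (1 + a sin θ)/2`; then `cos ψ = (1 - a²)/(1 - a² sin² θ)` and the sign of `sin ψ` is that of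
`-cos θ`, which determines `ψ` as an `arctan`. In this angle the flow moves with the positive
`π`-periodic speed `θ' = √(2 - a² - a² sin² θ)`, so `θ` is the inverse of `x ↦ ∫ dx / speed`, and
`θ` runs from `-π/2` to `π/2` (i.e. `K` from `γ` to `1 - γ`) in the time `T` it takes to gain `π`.
-/

open Real Filter intervalIntegral

section TimeChange

variable {v : ℝ → ℝ} {p : ℝ}

theorem Function.Periodic.surjective_intervalIntegral (hv : Continuous v) (hpos : ∀ x, 0 < v x)
    (hper : v.Periodic p) (hp : 0 < p) : Function.Surjective fun x => ∫ u in 0..x, v u :=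
  (continuous_primitive (fun _ _ => hv.intervalIntegrable _ _) 0).surjective
    (hper.tendsto_atTop_intervalIntegral_of_pos' (hv.intervalIntegrable _ _) hpos hp)
    (hper.tendsto_atBot_intervalIntegral_of_pos' (hv.intervalIntegrable _ _) hpos hp)

theorem Function.Periodic.exists_hasDerivAt_comp (hv : Continuous v) (hpos : ∀ x, 0 < v x)
    (hper : v.Periodic p) (hp : 0 < p) (x₀ : ℝ) :
    ∃ (θ : ℝ → ℝ) (P : ℝ), 0 < P ∧ (∀ t, HasDerivAt θ (v (θ t)) t) ∧ θ 0 = x₀ ∧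
      ∀ t, θ (t + P) = θ t + p := by
  set F : ℝ → ℝ := fun x => ∫ u in 0..x, (v u)⁻¹
  have hv' : Continuous fun x => (v x)⁻¹ := hv.inv₀ fun x => (hpos x).ne'
  have hpos' : ∀ x, 0 < (v x)⁻¹ := fun x => inv_pos.2 (hpos x)
  have hF : ∀ x, HasDerivAt F (v x)⁻¹ x := fun x => (hv'.integral_hasStrictDerivAt 0 x).hasDerivAt
  have hmono : StrictMono F := strictMono_of_deriv_pos fun x => (hF x).deriv ▸ hpos' x
  have hper' : (fun x => (v x)⁻¹).Periodic p := fun x => by simp only [hper x]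
  have hsurj : Function.Surjective F := hper'.surjective_intervalIntegral hv' hpos' hp
  set e := hmono.orderIsoOfSurjective F hsurj
  have hFe : ∀ y, F (e.symm y) = y := e.apply_symm_apply
  have heF : ∀ x, e.symm (F x) = x := e.symm_apply_apply
  have hF_add : ∀ x, F (x + p) = F x + F p := fun x => by
    simpa using hper'.intervalIntegral_add_eq_add 0 x fun _ _ => hv'.intervalIntegrable _ _
  refine ⟨fun t => e.symm (t + F x₀), F p, ?_, fun t => ?_, by simpa using heF x₀, fun t => ?_⟩
  · simpa [F] using hmono hp
  · have := (hF (e.symm (t + F x₀))).of_local_left_inverse e.symm.continuous.continuousAt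
      (hpos' _).ne' (Eventually.of_forall hFe)
    simpa using this.comp_add_const t (F x₀)
  · refine e.injective ?_
    show F _ = F _
    rw [hF_add, hFe, hFe]
    ring

theorem HasDerivAt.comp_div_cancel {f θ : ℝ → ℝ} {y t : ℝ}
    (hf : HasDerivAt f (y / v (θ t)) (θ t)) (hθ : HasDerivAt θ (v (θ t)) t) (hv : v (θ t) ≠ 0) :
    HasDerivAt (f ∘ θ) y t :=
  (hf.comp t hθ).congr_deriv (div_mul_cancel₀ y hv)

end TimeChange

namespace Pendulum

/-- `θ ↦ (orbitPsi a θ, orbitK a θ)` parametrizes the level set `2K(1-K) cos ψ = (1 - a²)/2`,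
traversed by the flow at the rate `dθ/dt = orbitSpeed a θ`. -/
noncomputable def orbitSpeed (a θ : ℝ) : ℝ := √(2 - a ^ 2 - a ^ 2 * sin θ ^ 2)

noncomputable def orbitK (a θ : ℝ) : ℝ := (1 + a * sin θ) / 2

noncomputable def orbitTan (a θ : ℝ) : ℝ := -(a * cos θ * orbitSpeed a θ) / (1 - a ^ 2)

noncomputable def orbitPsi (a θ : ℝ) : ℝ := arctan (orbitTan a θ)

variable {a : ℝ}

theorem one_sub_sq_mul_sin_sq_pos (ha : a ^ 2 < 1) (θ : ℝ) : 0 < 1 - a ^ 2 * sin θ ^ 2 := by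
  nlinarith [sin_sq_le_one θ, sq_nonneg (sin θ)]

theorem orbitSpeed_sq (ha : a ^ 2 < 1) (θ : ℝ) :
    orbitSpeed a θ ^ 2 = 2 - a ^ 2 - a ^ 2 * sin θ ^ 2 :=
  sq_sqrt (by linarith [one_sub_sq_mul_sin_sq_pos ha θ])

theorem orbitSpeed_pos (ha : a ^ 2 < 1) (θ : ℝ) : 0 < orbitSpeed a θ :=
  sqrt_pos.2 (by linarith [one_sub_sq_mul_sin_sq_pos ha θ])

theorem continuous_orbitSpeed : Continuous (orbitSpeed a) := by
  unfold orbitSpeed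
  fun_prop

theorem orbitSpeed_periodic : (orbitSpeed a).Periodic π := fun θ => by
  simp only [orbitSpeed, sin_add_pi, neg_sq]

theorem hasDerivAt_orbitSpeed (ha : a ^ 2 < 1) (θ : ℝ) :
    HasDerivAt (orbitSpeed a) (-(a ^ 2 * sin θ * cos θ) / orbitSpeed a θ) θ := by
  have h := ((((hasDerivAt_sin θ).fun_pow 2).const_mul (a ^ 2)).const_sub (2 - a ^ 2)).sqrt
    (orbitSpeed_sq ha θ ▸ pow_pos (orbitSpeed_pos ha θ) 2).ne'
  refine h.congr_deriv ?_
  rw [← orbitSpeed]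
  field_simp
  ring

theorem one_add_orbitTan_sq (ha : a ^ 2 < 1) (θ : ℝ) :
    1 + orbitTan a θ ^ 2 = ((1 - a ^ 2 * sin θ ^ 2) / (1 - a ^ 2)) ^ 2 := by
  have hc : 1 - a ^ 2 ≠ 0 := by linarith
  unfold orbitTan
  field_simp
  linear_combination (a ^ 2 * cos θ ^ 2) * orbitSpeed_sq ha θ +
    (a ^ 2 * (2 - a ^ 2 - a ^ 2 * sin θ ^ 2)) * sin_sq_add_cos_sq θ

theorem sqrt_one_add_orbitTan_sq (ha : a ^ 2 < 1) (θ : ℝ) :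
    √(1 + orbitTan a θ ^ 2) = (1 - a ^ 2 * sin θ ^ 2) / (1 - a ^ 2) := by
  rw [one_add_orbitTan_sq ha,
    sqrt_sq (div_nonneg (one_sub_sq_mul_sin_sq_pos ha θ).le (by linarith))]

theorem hasDerivAt_orbitTan (ha : a ^ 2 < 1) (θ : ℝ) :
    HasDerivAt (orbitTan a)
      (2 * a * sin θ * (1 - a ^ 2 * sin θ ^ 2) / ((1 - a ^ 2) * orbitSpeed a θ)) θ := by
  have hc : 1 - a ^ 2 ≠ 0 := by linarith
  have hg := (orbitSpeed_pos ha θ).ne'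
  have h := (((hasDerivAt_cos θ).const_mul a).fun_mul
    (hasDerivAt_orbitSpeed ha θ)).fun_neg.div_const (1 - a ^ 2)
  refine h.congr_deriv ?_
  field_simp
  linear_combination (a * sin θ) * orbitSpeed_sq ha θ + (a ^ 3 * sin θ) * sin_sq_add_cos_sq θ

theorem cos_orbitPsi (ha : a ^ 2 < 1) (θ : ℝ) :
    cos (orbitPsi a θ) = (1 - a ^ 2) / (1 - a ^ 2 * sin θ ^ 2) := by
  rw [orbitPsi, cos_arctan, sqrt_one_add_orbitTan_sq ha, one_div_div]

theorem sin_orbitPsi (ha : a ^ 2 < 1) (θ : ℝ) :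
    sin (orbitPsi a θ) = -(a * cos θ * orbitSpeed a θ) / (1 - a ^ 2 * sin θ ^ 2) := by
  have hc : 1 - a ^ 2 ≠ 0 := by linarith
  rw [orbitPsi, sin_arctan, sqrt_one_add_orbitTan_sq ha, orbitTan]
  field_simp [(one_sub_sq_mul_sin_sq_pos ha θ).ne']

theorem hasDerivAt_orbitK (ha : a ^ 2 < 1) (θ : ℝ) :
    HasDerivAt (orbitK a)
      (-2 * orbitK a θ * (1 - orbitK a θ) * sin (orbitPsi a θ) / orbitSpeed a θ) θ := by
  refine ((((hasDerivAt_sin θ).const_mul a).const_add 1).div_const 2).congr_deriv ?_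
  rw [sin_orbitPsi ha, orbitK]
  field_simp [(one_sub_sq_mul_sin_sq_pos ha θ).ne', (orbitSpeed_pos ha θ).ne']
  ring

theorem hasDerivAt_orbitPsi (ha : a ^ 2 < 1) (θ : ℝ) :
    HasDerivAt (orbitPsi a)
      (-2 * (1 - 2 * orbitK a θ) * cos (orbitPsi a θ) / orbitSpeed a θ) θ := by
  have hc : 1 - a ^ 2 ≠ 0 := by linarith
  refine (hasDerivAt_orbitTan ha θ).arctan.congr_deriv ?_
  rw [one_add_orbitTan_sq ha, cos_orbitPsi ha, orbitK]
  field_simp [(one_sub_sq_mul_sin_sq_pos ha θ).ne', (orbitSpeed_pos ha θ).ne']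
  ring

theorem orbitPsi_eq_zero {θ : ℝ} (h : cos θ = 0) : orbitPsi a θ = 0 := by
  simp [orbitPsi, orbitTan, h]

theorem orbitPsi_periodic : (orbitPsi a).Periodic (2 * π) := fun θ => by
  simp only [orbitPsi, orbitTan, orbitSpeed, cos_add_two_pi, sin_add_two_pi]

theorem orbitK_periodic : (orbitK a).Periodic (2 * π) := fun θ => by
  simp only [orbitK, sin_add_two_pi]

theorem orbitK_mem_Ioo (ha : a ^ 2 < 1) (θ : ℝ) : orbitK a θ ∈ Set.Ioo 0 1 := by
  have h : |a * sin θ| < 1 := by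
    rw [← sq_lt_one_iff_abs_lt_one, mul_pow]
    nlinarith [sin_sq_le_one θ, sq_nonneg a]
  constructor <;> unfold orbitK <;> linarith [abs_lt.1 h]

end Pendulum

open Pendulum in
theorem pendulum_periodic_orbit (γ : ℝ) (hγ0 : 0 < γ) (hγ : γ < 1 / 2) :
    ∃ (ψ K : ℝ → ℝ) (T : ℝ), 0 < T ∧
      (∀ t, HasDerivAt ψ (-2 * (1 - 2 * K t) * Real.cos (ψ t)) t) ∧
      (∀ t, HasDerivAt K (-2 * K t * (1 - K t) * Real.sin (ψ t)) t) ∧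
      ψ 0 = 0 ∧ K 0 = γ ∧
      (∀ t, ψ (t + 2 * T) = ψ t ∧ K (t + 2 * T) = K t) ∧
      ψ T = 0 ∧ K T = 1 - γ ∧
      (∀ t, K t ∈ Set.Ioo (0 : ℝ) 1) := by
  set a := 1 - 2 * γ
  have ha : a ^ 2 < 1 := by nlinarith
  obtain ⟨θ, T, hT, hθ, hθ0, hθT⟩ := orbitSpeed_periodic.exists_hasDerivAt_comp
    continuous_orbitSpeed (orbitSpeed_pos ha) pi_pos (-(π / 2))
  have hθT0 : θ T = π / 2 := by
    have h := hθT 0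
    rw [zero_add, hθ0] at h
    linarith
  have hθ2T (t : ℝ) : θ (t + 2 * T) = θ t + 2 * π := by
    rw [two_mul, ← add_assoc, hθT, hθT]
    ring
  refine ⟨orbitPsi a ∘ θ, orbitK a ∘ θ, T, hT, fun t => ?_, fun t => ?_, ?_, ?_, fun t => ?_,
    ?_, ?_, fun t => orbitK_mem_Ioo ha (θ t)⟩
  · exact (hasDerivAt_orbitPsi ha (θ t)).comp_div_cancel (hθ t) (orbitSpeed_pos ha _).ne'
  · exact (hasDerivAt_orbitK ha (θ t)).comp_div_cancel (hθ t) (orbitSpeed_pos ha _).ne'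
  · simp [hθ0, orbitPsi_eq_zero]
  · simp [hθ0, orbitK, a]
  · simp [hθ2T, orbitPsi_periodic _, orbitK_periodic _]
  · simp [hθT0, orbitPsi_eq_zero]
  · simp only [Function.comp_apply, orbitK, hθT0, sin_pi_div_two, a]
    ring
end

section
/- There exists a constant C > 0 such that for every γ ∈ (0, 1/2), the half-period T_γ = 2 ∫_γ^{1/2} dK / sqrt((2K(1−K))^2 − h^2), with h = 2γ(1−γ), is finite and satisfies T_γ ≤ −C ln γ = C |ln γ|. -/
open Real MeasureTheory

lemma lb1 {γ K : ℝ} (hγ0 : 0 < γ) (hγK : γ ≤ K) (hK : K ≤ 1/2) :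
    2*γ*(1-2*γ)*(K-γ) ≤ (2*K*(1-K))^2 - (2*γ*(1-γ))^2 := by
  have hK0 : 0 ≤ K := le_trans hγ0.le hγK
  have e : (2*K*(1-K))^2 - (2*γ*(1-γ))^2
      = 4*(K-γ)*((1-K-γ)*(K-K^2+γ-γ^2)) := by ring
  rw [e]
  have hA : (1:ℝ)/2 - γ ≤ 1 - K - γ := by linarith
  have hB : γ ≤ K - K^2 + γ - γ^2 := by
    nlinarith [mul_nonneg hK0 (by linarith : (0:ℝ) ≤ 1/2 - K),
      mul_nonneg hγ0.le (by linarith : (0:ℝ) ≤ 1/2 - γ)]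
  have p : (1/2 - γ) * γ ≤ (1-K-γ)*(K-K^2+γ-γ^2) :=
    mul_le_mul hA hB hγ0.le (by linarith)
  nlinarith [mul_le_mul_of_nonneg_left p (by linarith : (0:ℝ) ≤ 4*(K-γ))]

lemma lb2 {γ K : ℝ} (hγ0 : 0 < γ) (hγ4 : γ ≤ 1/4) (h2γ : 2*γ ≤ K) (hK : K ≤ 1/2) :
    K^2/4 ≤ (2*K*(1-K))^2 - (2*γ*(1-γ))^2 := by
  have hK0 : 0 ≤ K := by linarith
  have e : (2*K*(1-K))^2 - (2*γ*(1-γ))^2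
      = 4*(K-γ)*((1-K-γ)*(K-K^2+γ-γ^2)) := by ring
  rw [e]
  have h1 : K/2 ≤ K - γ := by linarith
  have h2 : (1:ℝ)/4 ≤ 1 - K - γ := by linarith
  have h3 : K/2 ≤ K - K^2 + γ - γ^2 := by
    nlinarith [mul_nonneg hK0 (by linarith : (0:ℝ) ≤ 1/2 - K),
      mul_nonneg hγ0.le (by linarith : (0:ℝ) ≤ 1/2 - γ)]
  have p : 1/4 * (K/2) ≤ (1-K-γ)*(K-K^2+γ-γ^2) :=
    mul_le_mul h2 h3 (by linarith) (by linarith)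
  have q : (K/2) * (1/4 * (K/2)) ≤ (K-γ) * ((1-K-γ)*(K-K^2+γ-γ^2)) :=
    mul_le_mul h1 p (by positivity) (by linarith)
  nlinarith [q]

-- rpow shift integrability
lemma ii_rpow_shift (γ a b : ℝ) :
    IntervalIntegrable (fun x : ℝ => (x - γ) ^ (-(1/2) : ℝ)) volume a b := by
  have := (intervalIntegral.intervalIntegrable_rpow' (a := a - γ) (b := b - γ) (r := -(1/2))
    (by norm_num)).comp_sub_right γ
  simpa using this

-- rpow shift integral value
lemma int_rpow_shift {γ b : ℝ} (h : γ ≤ b) :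
    ∫ x in γ..b, (x - γ) ^ (-(1/2) : ℝ) = 2 * Real.sqrt (b - γ) := by
  rw [intervalIntegral.integral_comp_sub_right (fun x => x ^ (-(1/2):ℝ)) γ, sub_self,
    integral_rpow (Or.inl (by norm_num : (-1:ℝ) < -(1/2)))]
  rw [Real.zero_rpow (by norm_num), Real.sqrt_eq_rpow]
  norm_num
  ring

theorem half_period_log_bound :
    ∃ C > (0 : ℝ), ∀ γ : ℝ, 0 < γ → γ < 1 / 2 →
      IntegrableOn
        (fun K => 1 / Real.sqrt ((2 * K * (1 - K)) ^ 2 - (2 * γ * (1 - γ)) ^ 2))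
        (Set.Ioo γ (1 / 2)) volume ∧
      2 * ∫ K in Set.Ioo γ (1 / 2),
          1 / Real.sqrt ((2 * K * (1 - K)) ^ 2 - (2 * γ * (1 - γ)) ^ 2) ≤
        -C * Real.log γ := by
  refine ⟨10, by norm_num, fun γ hγ0 hγh => ?_⟩
  have hc : 0 < 2*γ*(1-2*γ) := by nlinarith
  set c : ℝ := Real.sqrt (2*γ*(1-2*γ)) with hcdef
  have hcpos : 0 < c := Real.sqrt_pos.2 hc
  -- pointwise bound on all of Icc γ (1/2)
  have hpt : ∀ K ∈ Set.Icc γ (1/2),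
      1 / Real.sqrt ((2 * K * (1 - K)) ^ 2 - (2 * γ * (1 - γ)) ^ 2)
        ≤ (1/c) * (K - γ) ^ (-(1/2) : ℝ) := by
    intro K hK
    rcases eq_or_lt_of_le hK.1 with h | h
    · rw [← h]
      simp [Real.zero_rpow]
    · have hKγ : (0:ℝ) < K - γ := by linarith
      have hlow := lb1 hγ0 h.le hK.2
      have h1 : 0 < 2*γ*(1-2*γ)*(K-γ) := mul_pos hc hKγ
      calc 1 / Real.sqrt ((2 * K * (1 - K)) ^ 2 - (2 * γ * (1 - γ)) ^ 2)
          ≤ 1 / Real.sqrt (2*γ*(1-2*γ)*(K-γ)) :=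
            one_div_le_one_div_of_le (Real.sqrt_pos.2 h1) (Real.sqrt_le_sqrt hlow)
        _ = (1/c) * (K - γ) ^ (-(1/2) : ℝ) := by
            rw [Real.rpow_neg hKγ.le, ← Real.sqrt_eq_rpow, Real.sqrt_mul hc.le,
              one_div, one_div, mul_inv]
  -- majorant integrable
  have hMint : IntervalIntegrable (fun K : ℝ => (1/c) * (K - γ) ^ (-(1/2) : ℝ))
      volume γ (1/2) := (ii_rpow_shift γ γ (1/2)).const_mul _
  -- integrability of the integrand on Ioc
  have hmeas : AEStronglyMeasurable
      (fun K => 1 / Real.sqrt ((2 * K * (1 - K)) ^ 2 - (2 * γ * (1 - γ)) ^ 2))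
      (volume.restrict (Set.Ioc γ (1/2))) := by
    apply Measurable.aestronglyMeasurable
    fun_prop
  have hgIoc : IntegrableOn
      (fun K => 1 / Real.sqrt ((2 * K * (1 - K)) ^ 2 - (2 * γ * (1 - γ)) ^ 2))
      (Set.Ioc γ (1/2)) volume := by
    refine Integrable.mono'
      ((intervalIntegrable_iff_integrableOn_Ioc_of_le hγh.le).1 hMint) hmeas ?_
    refine (ae_restrict_iff' measurableSet_Ioc).2 (ae_of_all _ fun K hK => ?_)
    have hb := hpt K ⟨hK.1.le, hK.2⟩
    have : (0:ℝ) ≤ 1 / Real.sqrt ((2 * K * (1 - K)) ^ 2 - (2 * γ * (1 - γ)) ^ 2) := by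
      positivity
    rw [Real.norm_eq_abs, abs_of_nonneg this]
    exact hb
  have hgII : IntervalIntegrable
      (fun K => 1 / Real.sqrt ((2 * K * (1 - K)) ^ 2 - (2 * γ * (1 - γ)) ^ 2))
      volume γ (1/2) := (intervalIntegrable_iff_integrableOn_Ioc_of_le hγh.le).2 hgIoc
  refine ⟨hgIoc.mono_set Set.Ioo_subset_Ioc_self, ?_⟩
  have hre : (∫ K in Set.Ioo γ (1/2),
      1 / Real.sqrt ((2 * K * (1 - K)) ^ 2 - (2 * γ * (1 - γ)) ^ 2))
      = ∫ K in γ..(1/2), 1 / Real.sqrt ((2 * K * (1 - K)) ^ 2 - (2 * γ * (1 - γ)) ^ 2) := by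
    rw [intervalIntegral.integral_of_le hγh.le, MeasureTheory.integral_Ioc_eq_integral_Ioo]
  rw [hre]
  have hlogγ : Real.log γ < -Real.log 2 := by
    have h := Real.log_lt_log hγ0 hγh
    rwa [show (1:ℝ)/2 = 2⁻¹ by norm_num, Real.log_inv] at h
  have l2 := Real.log_two_gt_d9
  rcases le_or_gt (1/4 : ℝ) γ with h4 | h4
  · -- big γ case
    have hI : (∫ K in γ..(1/2),
        1 / Real.sqrt ((2 * K * (1 - K)) ^ 2 - (2 * γ * (1 - γ)) ^ 2))
        ≤ ∫ K in γ..(1/2), (1/c) * (K - γ) ^ (-(1/2) : ℝ) :=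
      intervalIntegral.integral_mono_on hγh.le hgII hMint hpt
    have hMval : (∫ K in γ..(1/2), (1/c) * (K - γ) ^ (-(1/2) : ℝ))
        = (1/c) * (2 * Real.sqrt (1/2 - γ)) := by
      rw [intervalIntegral.integral_const_mul, int_rpow_shift hγh.le]
    have hsle : Real.sqrt (1/2 - γ) ≤ c := Real.sqrt_le_sqrt (by nlinarith)
    have hle2 : (1/c) * (2 * Real.sqrt (1/2 - γ)) ≤ 2 := by
      rw [one_div, inv_mul_le_iff₀ hcpos]
      nlinarith [Real.sqrt_nonneg (1/2 - γ)]
    nlinarith [hI, hMval.le, hMval.ge]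
  · -- small γ case : split at 2γ
    have h2a : γ < 2*γ := by linarith
    have h2b : 2*γ < 1/2 := by linarith
    have hsub1 : Set.uIcc γ (2*γ) ⊆ Set.uIcc γ (1/2) := by
      rw [Set.uIcc_of_le h2a.le, Set.uIcc_of_le hγh.le]
      exact Set.Icc_subset_Icc le_rfl h2b.le
    have hsub2 : Set.uIcc (2*γ) (1/2) ⊆ Set.uIcc γ (1/2) := by
      rw [Set.uIcc_of_le h2b.le, Set.uIcc_of_le hγh.le]
      exact Set.Icc_subset_Icc h2a.le le_rfl
    have hg1 := hgII.mono_set hsub1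
    have hg2 := hgII.mono_set hsub2
    have hsplit := intervalIntegral.integral_add_adjacent_intervals hg1 hg2
    -- piece 1 bound
    have hpt1 : ∀ K ∈ Set.Icc γ (2*γ),
        1 / Real.sqrt ((2 * K * (1 - K)) ^ 2 - (2 * γ * (1 - γ)) ^ 2)
          ≤ (1/Real.sqrt γ) * (K - γ) ^ (-(1/2) : ℝ) := by
      intro K hK
      rcases eq_or_lt_of_le hK.1 with h | h
      · rw [← h]; simp [Real.zero_rpow]
      · have hKγ : (0:ℝ) < K - γ := by linarith
        have hlow := lb1 hγ0 h.le (by linarith [hK.2] : K ≤ 1/2)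
        have hmid : γ * (K - γ) ≤ 2*γ*(1-2*γ)*(K-γ) := by nlinarith [mul_nonneg (mul_nonneg hγ0.le hKγ.le) (by linarith : (0:ℝ) ≤ 1-4*γ)]
        have h1 : 0 < γ*(K-γ) := mul_pos hγ0 hKγ
        calc 1 / Real.sqrt ((2 * K * (1 - K)) ^ 2 - (2 * γ * (1 - γ)) ^ 2)
            ≤ 1 / Real.sqrt (γ*(K-γ)) :=
              one_div_le_one_div_of_le (Real.sqrt_pos.2 h1)
                (Real.sqrt_le_sqrt (le_trans hmid hlow))
          _ = (1/Real.sqrt γ) * (K - γ) ^ (-(1/2) : ℝ) := by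
              rw [Real.rpow_neg hKγ.le, ← Real.sqrt_eq_rpow, Real.sqrt_mul hγ0.le,
                one_div, one_div, mul_inv]
    have hM1 : IntervalIntegrable (fun K : ℝ => (1/Real.sqrt γ) * (K - γ) ^ (-(1/2) : ℝ))
        volume γ (2*γ) := (ii_rpow_shift γ γ (2*γ)).const_mul _
    have hI1 : (∫ K in γ..(2*γ),
        1 / Real.sqrt ((2 * K * (1 - K)) ^ 2 - (2 * γ * (1 - γ)) ^ 2)) ≤ 2 := by
      have step := intervalIntegral.integral_mono_on h2a.le hg1 hM1 hpt1
      have hv : (∫ K in γ..(2*γ), (1/Real.sqrt γ) * (K - γ) ^ (-(1/2) : ℝ))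
          = (1/Real.sqrt γ) * (2 * Real.sqrt (2*γ - γ)) := by
        rw [intervalIntegral.integral_const_mul, int_rpow_shift h2a.le]
      have hg' : Real.sqrt (2*γ - γ) = Real.sqrt γ := by rw [show 2*γ - γ = γ by ring]
      have hsγ : 0 < Real.sqrt γ := Real.sqrt_pos.2 hγ0
      rw [hv, hg'] at step
      calc _ ≤ (1/Real.sqrt γ) * (2 * Real.sqrt γ) := step
        _ = 2 := by field_simp
    -- piece 2 bound
    have hpt2 : ∀ K ∈ Set.Icc (2*γ) (1/2),
        1 / Real.sqrt ((2 * K * (1 - K)) ^ 2 - (2 * γ * (1 - γ)) ^ 2) ≤ 2/K := by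
      intro K hK
      have hK0 : 0 < K := by linarith [hK.1]
      have hlow := lb2 hγ0 h4.le hK.1 hK.2
      have hs : K/2 ≤ Real.sqrt ((2 * K * (1 - K)) ^ 2 - (2 * γ * (1 - γ)) ^ 2) := by
        rw [Real.le_sqrt (by positivity) (by nlinarith)]
        nlinarith
      have := one_div_le_one_div_of_le (by positivity : (0:ℝ) < K/2) hs
      calc 1 / Real.sqrt ((2 * K * (1 - K)) ^ 2 - (2 * γ * (1 - γ)) ^ 2)
          ≤ 1/(K/2) := this
        _ = 2/K := by field_simp
    have hM2 : IntervalIntegrable (fun K : ℝ => 2/K) volume (2*γ) (1/2) := by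
      apply ContinuousOn.intervalIntegrable
      apply ContinuousOn.div continuousOn_const continuousOn_id
      intro x hx
      rw [Set.uIcc_of_le h2b.le] at hx
      have hx0 : (0:ℝ) < x := by linarith [hx.1]
      exact ne_of_gt hx0
    have hI2 : (∫ K in (2*γ)..(1/2),
        1 / Real.sqrt ((2 * K * (1 - K)) ^ 2 - (2 * γ * (1 - γ)) ^ 2))
        ≤ -2*Real.log γ - 4*Real.log 2 := by
      have step := intervalIntegral.integral_mono_on h2b.le hg2 hM2 hpt2
      have h0 : (0:ℝ) ∉ Set.uIcc (2*γ) (1/2) := by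
        rw [Set.uIcc_of_le h2b.le]
        intro hx
        have := hx.1
        linarith
      have hv : (∫ K in (2*γ)..(1/2), 2/K) = 2 * Real.log ((1/2)/(2*γ)) := by
        simp_rw [div_eq_mul_one_div (2:ℝ)]
        rw [intervalIntegral.integral_const_mul, integral_one_div h0]
      have harg : ((1:ℝ)/2)/(2*γ) = (4*γ)⁻¹ := by
        field_simp
        ring
      have hlogv : Real.log ((1/2)/(2*γ)) = -Real.log γ - 2*Real.log 2 := by
        rw [harg, Real.log_inv, Real.log_mul (by norm_num) (ne_of_gt hγ0),
          show (4:ℝ) = 2^2 by norm_num, Real.log_pow]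
        push_cast; ring
      rw [hv, hlogv] at step
      linarith
    have hlog4 : Real.log γ < -(2*Real.log 2) := by
      have h := Real.log_lt_log hγ0 h4
      rwa [show (1:ℝ)/4 = (2^2)⁻¹ by norm_num, Real.log_inv, Real.log_pow,
        Nat.cast_ofNat] at h
    have htot : (∫ K in γ..(1/2),
        1 / Real.sqrt ((2 * K * (1 - K)) ^ 2 - (2 * γ * (1 - γ)) ^ 2))
        ≤ 2 + (-2*Real.log γ - 4*Real.log 2) := by
      rw [← hsplit]; linarith
    linarith
end
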